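/- For all integers k, r and s: G(0)·H(0)·I(k+r+s−2) + (G(0)·H(1) + G(1)·H(0))·I(k+r+s−1) + G(1)·H(1)·I(k+r+s) = G(s+1)·H(r+1)·I(k+1) + G(s)·H(r)·I(k) − G(s−1)·H(r−1)·I(k−1). -/

import Mathlib

/-!
Two gibonacci sequences agreeing at `0` and `1` agree everywhere, so the addition formula
`G a * I (b + 1) + G (a - 1) * I b = G 0 * I (a + b - 1) + G 1 * I (a + b)`
(which for `G = I = F` is `F (a + b) = F a * F (b + 1) + F (a - 1) * F b`) only needs checking at
`a = 0, 1`. Grouping the left-hand side by `H 0` and `H 1`, one application to `(G, I)` and one to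
`(H, J)` with `J m = G s * I (m + 1) + G (s - 1) * I m` turn it into a trilinear expression in
`G s, G (s - 1), H r, H (r - 1), I (k + 1), I k`; the recurrences reduce the right-hand side to the
same expression.
-/

def IsGibonacci {R : Type*} [Add R] (f : ℤ → R) : Prop :=
  ∀ n : ℤ, f n = f (n - 1) + f (n - 2)

namespace IsGibonacci

theorem ext {R : Type*} [AddCommGroup R] {f g : ℤ → R} (hf : IsGibonacci f)
    (hg : IsGibonacci g) (h0 : f 0 = g 0) (h1 : f 1 = g 1) : f = g := by
  suffices h : ∀ n : ℤ, f n = g n ∧ f (n + 1) = g (n + 1) from funext fun n => (h n).1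
  intro n
  induction n using Int.induction_on with
  | zero => exact ⟨h0, h1⟩
  | succ i ih =>
    refine ⟨ih.2, ?_⟩
    have hi : (i : ℤ) + 1 + 1 - 2 = i := by ring
    rw [hf, hg, add_sub_cancel_right, hi, ih.1, ih.2]
  | pred i ih =>
    have hf' := hf (-i + 1)
    have hg' := hg (-i + 1)
    have h₁ : -(i : ℤ) + 1 - 1 = -i := by ring
    have h₂ : -(i : ℤ) + 1 - 2 = -i - 1 := by ring
    rw [h₁, h₂] at hf' hg'
    rw [sub_add_cancel]
    refine ⟨?_, ih.1⟩
    rw [eq_sub_of_add_eq' hf'.symm, eq_sub_of_add_eq' hg'.symm, ih.1, ih.2]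

variable {R : Type*} [CommRing R]

theorem addition_formula {G I : ℤ → R} (hG : IsGibonacci G) (hI : IsGibonacci I) (a b : ℤ) :
    G a * I (b + 1) + G (a - 1) * I b = G 0 * I (a + b - 1) + G 1 * I (a + b) := by
  have key := ext (f := fun a => G a * I (b + 1) + G (a - 1) * I b)
    (g := fun a => G 0 * I (a + b - 1) + G 1 * I (a + b))
    (fun n => by linear_combination (norm := ring_nf) I (b + 1) * hG n + I b * hG (n - 1))
    (fun n => by
      linear_combination (norm := ring_nf) G 0 * hI (n + b - 1) + G 1 * hI (n + b))
    (by linear_combination (norm := ring_nf) -I b * hG 1 + G 0 * hI (b + 1))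
    (by ring_nf)
  exact congrFun key a

end IsGibonacci

/-- full generalization of Lucas's triple-angle formula to three
gibonacci sequences. -/
theorem statement17 (G H I : ℤ → ℝ)
    (hG : ∀ n : ℤ, G n = G (n - 1) + G (n - 2))
    (hH : ∀ n : ℤ, H n = H (n - 1) + H (n - 2))
    (hI : ∀ n : ℤ, I n = I (n - 1) + I (n - 2))
    (k r s : ℤ) :
    G 0 * H 0 * I (k + r + s - 2) + (G 0 * H 1 + G 1 * H 0) * I (k + r + s - 1)
        + G 1 * H 1 * I (k + r + s) =
      G (s + 1) * H (r + 1) * I (k + 1) + G s * H r * I k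
        - G (s - 1) * H (r - 1) * I (k - 1) := by
  set J : ℤ → ℝ := fun m => G s * I (m + 1) + G (s - 1) * I m with hJ_def
  have hJ : IsGibonacci J := fun n => by
    simp only [hJ_def]
    linear_combination (norm := ring_nf) G s * hI (n + 1) + G (s - 1) * hI n
  have hGI (m : ℤ) : G 0 * I (s + m - 1) + G 1 * I (s + m) = J m :=
    (IsGibonacci.addition_formula hG hI s m).symm
  calc G 0 * H 0 * I (k + r + s - 2) + (G 0 * H 1 + G 1 * H 0) * I (k + r + s - 1)
        + G 1 * H 1 * I (k + r + s)
      = H 0 * J (r + k - 1) + H 1 * J (r + k) := by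
        rw [← hGI, ← hGI]; ring_nf
    _ = H r * J (k + 1) + H (r - 1) * J k := (IsGibonacci.addition_formula hH hJ r k).symm
    _ = G (s + 1) * H (r + 1) * I (k + 1) + G s * H r * I k
          - G (s - 1) * H (r - 1) * I (k - 1) := by
      simp only [hJ_def]
      linear_combination (norm := ring_nf) G s * H r * hI (k + 2)
        - H (r + 1) * I (k + 1) * hG (s + 1) - (G s + G (s - 1)) * I (k + 1) * hH (r + 1)
        - G (s - 1) * H (r - 1) * hI (k + 1)
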